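/- For every tetrahedral erasure channel W and every natural number n, the sum of A(W^c) over all 2^n strings c ∈ {s,p}^n is at most A(W); equivalently, the average of the moment of inertia over all n-th-generation descendants of W is at most A(W)/2^n. -/

import Mathlib

noncomputable section

/-- A quintuple of reals representing a candidate tetrahedral erasure channel
`W = (p, q, r, s, t)`. -/
structure TECQuint where
  p : ℝ
  q : ℝ
  r : ℝ
  s : ℝ
  t : ℝ

namespace TECQuint

/-- `W` is a tetrahedral erasure channel: all five entries are nonnegative and sum to 1. -/
def IsTEC (W : TECQuint) : Prop :=
  0 ≤ W.p ∧ 0 ≤ W.q ∧ 0 ≤ W.r ∧ 0 ≤ W.s ∧ 0 ≤ W.t ∧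
    W.p + W.q + W.r + W.s + W.t = 1

/-- `W` is balanced: `q = r = s`. -/
def Balanced (W : TECQuint) : Prop := W.q = W.r ∧ W.r = W.s

/-- The serial child `W^s`. -/
def ser (W : TECQuint) : TECQuint where
  p := W.p ^ 2
  q := W.p * W.s + W.s * W.q + W.q * W.p
  r := W.p * W.q + W.q * W.r + W.r * W.p
  s := W.p * W.r + W.r * W.s + W.s * W.p
  t := 1 - (W.p ^ 2 + (W.p * W.s + W.s * W.q + W.q * W.p)
      + (W.p * W.q + W.q * W.r + W.r * W.p)
      + (W.p * W.r + W.r * W.s + W.s * W.p))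

/-- The parallel child `W^p`. -/
def par (W : TECQuint) : TECQuint where
  p := 1 - ((W.t * W.s + W.s * W.q + W.q * W.t)
      + (W.t * W.q + W.q * W.r + W.r * W.t)
      + (W.t * W.r + W.r * W.s + W.s * W.t) + W.t ^ 2)
  q := W.t * W.s + W.s * W.q + W.q * W.t
  r := W.t * W.q + W.q * W.r + W.r * W.t
  s := W.t * W.r + W.r * W.s + W.s * W.t
  t := W.t ^ 2

/-- The moment of inertia `A(W) = (q−r)² + (r−s)² + (s−q)²`. -/
def inertia (W : TECQuint) : ℝ :=
  (W.q - W.r) ^ 2 + (W.r - W.s) ^ 2 + (W.s - W.q) ^ 2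

/-- The (conditional) entropy `H(W) = (q+r+s)/2 + t`. -/
def entropy (W : TECQuint) : ℝ := (W.q + W.r + W.s) / 2 + W.t

/-- The edge mass `E(W) = q + r + s`. -/
def edgeMass (W : TECQuint) : ℝ := W.q + W.r + W.s

/-- The Quetelet index `Q(W) = E(W) / (H(W)(1−H(W)))`. -/
def quetelet (W : TECQuint) : ℝ :=
  edgeMass W / (entropy W * (1 - entropy W))

/-- One step of the channel process: `true` picks the serial child, `false` the parallel child. -/
def child (W : TECQuint) (b : Bool) : TECQuint := if b then ser W else par W

/-- The descendant `W^c` of `W` along the string `c ∈ {s,p}^n`. -/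
def descend : TECQuint → {n : ℕ} → (Fin n → Bool) → TECQuint
  | W, 0, _ => W
  | W, _ + 1, c => descend (child W (c 0)) (fun i => c i.succ)

end TECQuint

open TECQuint

/-!
Writing `A(W^s)` and `A(W^p)` in terms of `W` gives `Σ (p + q)² (r − s)²` and
`Σ (t + q)² (r − s)²`, cyclically in `q, r, s`. The weights lie in `[0, 1]`, so `a² ≤ a` bounds
the sum `A(W^s) + A(W^p)` by `Σ (p + t + 2q)(r − s)² = A(W) − Σ (r + s − q)(r − s)²`, and the last
sum is nonnegative by Schur's inequality. So `A` does not increase in one branching step, and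
the theorem follows by induction down the binary tree of descendants.
-/

theorem schur_inequality {R : Type*} [CommRing R] [LinearOrder R] [IsStrictOrderedRing R]
    {a b c : R} (ha : 0 ≤ a) (hb : 0 ≤ b) (hc : 0 ≤ c) :
    0 ≤ (b + c - a) * (b - c) ^ 2 + (c + a - b) * (c - a) ^ 2 + (a + b - c) * (a - b) ^ 2 := by
  rcases le_total a b with hab | hab <;> rcases le_total b c with hbc | hbc <;>
    rcases le_total a c with hac | hac <;>
    nlinarith [mul_nonneg (sub_nonneg.2 hab) (sub_nonneg.2 hbc),
      mul_nonneg (sub_nonneg.2 hab) (sub_nonneg.2 hac),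
      mul_nonneg (sub_nonneg.2 hbc) (sub_nonneg.2 hac),
      mul_nonneg ha hb, mul_nonneg hb hc, mul_nonneg ha hc]

namespace TECQuint

def swap (W : TECQuint) : TECQuint := ⟨W.t, W.q, W.r, W.s, W.p⟩

theorem par_eq_swap_ser_swap (W : TECQuint) : par W = swap (ser (swap W)) := by
  simp only [par, ser, swap, mk.injEq, and_true]
  ring

theorem inertia_swap (W : TECQuint) : inertia (swap W) = inertia W := rfl

theorem IsTEC.swap {W : TECQuint} (hW : W.IsTEC) : W.swap.IsTEC := by
  obtain ⟨hp, hq, hr, hs, ht, hsum⟩ := hW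
  exact ⟨ht, hq, hr, hs, hp, by simp only [TECQuint.swap]; linarith⟩

theorem IsTEC.ser {W : TECQuint} (hW : W.IsTEC) : W.ser.IsTEC := by
  obtain ⟨hp, hq, hr, hs, ht, hsum⟩ := hW
  -- `1 - (p² + …) = (p + q + r + s + t)² - (p² + …)`
  have ht' : W.ser.t = W.t * (W.t + 2 * (W.p + W.q + W.r + W.s))
      + (W.q ^ 2 + W.r ^ 2 + W.s ^ 2 + W.q * W.r + W.q * W.s + W.r * W.s) := by
    dsimp only [TECQuint.ser]
    linear_combination (-(W.p + W.q + W.r + W.s + W.t) - 1) * hsum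
  refine ⟨?_, ?_, ?_, ?_, ht' ▸ by positivity, by dsimp only [TECQuint.ser]; ring⟩ <;>
    dsimp only [TECQuint.ser] <;> positivity

theorem IsTEC.par {W : TECQuint} (hW : W.IsTEC) : W.par.IsTEC := by
  rw [par_eq_swap_ser_swap]
  exact hW.swap.ser.swap

theorem IsTEC.child {W : TECQuint} (hW : W.IsTEC) (b : Bool) : (W.child b).IsTEC := by
  cases b
  exacts [hW.par, hW.ser]

theorem inertia_ser (W : TECQuint) :
    inertia (ser W) = (W.p + W.q) ^ 2 * (W.r - W.s) ^ 2 + (W.p + W.r) ^ 2 * (W.s - W.q) ^ 2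
      + (W.p + W.s) ^ 2 * (W.q - W.r) ^ 2 := by
  simp only [inertia, ser]
  ring

theorem inertia_par (W : TECQuint) :
    inertia (par W) = (W.t + W.q) ^ 2 * (W.r - W.s) ^ 2 + (W.t + W.r) ^ 2 * (W.s - W.q) ^ 2
      + (W.t + W.s) ^ 2 * (W.q - W.r) ^ 2 := by
  rw [par_eq_swap_ser_swap, inertia_swap, inertia_ser]
  rfl

theorem inertia_ser_add_inertia_par_le {W : TECQuint} (hW : W.IsTEC) :
    inertia (ser W) + inertia (par W) ≤ inertia W := by
  obtain ⟨hp, hq, hr, hs, ht, hsum⟩ := hW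
  have sq_mul_le (a x : ℝ) (ha : 0 ≤ a) (ha' : a ≤ 1) : a ^ 2 * x ^ 2 ≤ a * x ^ 2 :=
    mul_le_mul_of_nonneg_right (sq_le ha ha') (sq_nonneg x)
  rw [inertia_ser, inertia_par]
  unfold inertia
  linear_combination sq_mul_le (W.p + W.q) (W.r - W.s) (by positivity) (by linarith)
    + sq_mul_le (W.p + W.r) (W.s - W.q) (by positivity) (by linarith)
    + sq_mul_le (W.p + W.s) (W.q - W.r) (by positivity) (by linarith)
    + sq_mul_le (W.t + W.q) (W.r - W.s) (by positivity) (by linarith)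
    + sq_mul_le (W.t + W.r) (W.s - W.q) (by positivity) (by linarith)
    + sq_mul_le (W.t + W.s) (W.q - W.r) (by positivity) (by linarith)
    + schur_inequality hq hr hs
    + ((W.q - W.r) ^ 2 + (W.r - W.s) ^ 2 + (W.s - W.q) ^ 2) * hsum

theorem sum_descend_le_of_ser_add_par_le (P : TECQuint → Prop) (f : TECQuint → ℝ)
    (hP : ∀ W, P W → ∀ b, P (child W b)) (hf : ∀ W, P W → f (ser W) + f (par W) ≤ f W)
    {W : TECQuint} (hW : P W) (n : ℕ) : ∑ c : Fin n → Bool, f (descend W c) ≤ f W := by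
  induction n generalizing W with
  | zero => simp [descend]
  | succ n ih =>
    calc ∑ c : Fin (n + 1) → Bool, f (descend W c)
        = ∑ b : Bool, ∑ c : Fin n → Bool, f (descend (child W b) c) := by
          rw [← (Fin.consEquiv fun _ => Bool).sum_comp, Fintype.sum_prod_type]
          rfl
      _ ≤ ∑ b : Bool, f (child W b) := Finset.sum_le_sum fun b _ => ih (hP W hW b)
      _ = f (ser W) + f (par W) := Fintype.sum_bool _
      _ ≤ f W := hf W hW

end TECQuint

theorem sum_inertia_descendants_le (W : TECQuint) (hW : W.IsTEC) (n : ℕ) :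
    ∑ c : Fin n → Bool, inertia (descend W c) ≤ inertia W :=
  sum_descend_le_of_ser_add_par_le IsTEC inertia (fun _ hW => hW.child)
    (fun _ hW => inertia_ser_add_inertia_par_le hW) hW n
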